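/- Let 𝔥 be a nonzero planar quasi-homogeneous polynomial of type t̂ and degree r+|t̂|, and let Δ̂_{k+|t̂|} be a fixed complement of 𝔥·𝒫^{t̂}_{k−r} in 𝒫^{t̂}_{k+|t̂|}. Then every planar quasi-homogeneous vector field P of type t̂ and degree k decomposes uniquely as P = X_g + μ·D₀ + λ·X_𝔥 with g ∈ Δ̂_{k+|t̂|}, μ ∈ 𝒫^{t̂}_k, λ ∈ 𝒫^{t̂}_{k−r}; i.e. 𝒬^{t̂}_k = Ĉ_k ⊕ D̂_k ⊕ F̂_k, where Ĉ_k = {X_g : g ∈ Δ̂_{k+|t̂|}}, D̂_k = {μD₀ : μ ∈ 𝒫^{t̂}_k}, F̂_k = {λX_𝔥 : λ ∈ 𝒫^{t̂}_{k−r}}. -/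

import Mathlib

open MvPolynomial

def IsQH (t : Fin 2 → ℕ) (k : ℕ) (f : MvPolynomial (Fin 2) ℝ) : Prop :=
  ∀ (ε : ℝ) (x : Fin 2 → ℝ),
    eval (fun i => ε ^ t i * x i) f = ε ^ k * eval x f

def IsQHVF (t : Fin 2 → ℕ) (k : ℕ) (F : Fin 2 → MvPolynomial (Fin 2) ℝ) : Prop :=
  ∀ j, IsQH t (k + t j) (F j)

noncomputable def ham (h : MvPolynomial (Fin 2) ℝ) : Fin 2 → MvPolynomial (Fin 2) ℝ :=
  ![-(pderiv 1 h), pderiv 0 h]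

noncomputable def D0 (t : Fin 2 → ℕ) : Fin 2 → MvPolynomial (Fin 2) ℝ :=
  ![C ((t 0 : ℝ)) * X 0, C ((t 1 : ℝ)) * X 1]

/-!
Everything is read off by wedging with the Euler field `D₀`. Euler's identity gives
`D₀ ∧ X_g = (deg g) g`, and `D₀ ∧ D₀ = 0`, so
`D₀ ∧ (X_g + μ D₀ + λ X_𝔥) = (k + |t̂|) g + (r + |t̂|) λ 𝔥`:
decomposing `D₀ ∧ P` along `Δ̂ ⊕ 𝔥 𝒫_{k-r}` pins down `g` and `λ`, and then `μ`.
For existence, Euler's identity applied to the components of a field `V` of degree `k` gives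
`(k + |t̂|) V = X_{D₀ ∧ V} + (div V) D₀`, so `V` is a multiple of `D₀` once `D₀ ∧ V = 0`;
this applies to `V = P - X_g - λ X_𝔥`.
-/

namespace MvPolynomial

variable {R σ : Type*} {w : σ → ℕ} {m : ℕ}

section CommSemiring

variable [CommSemiring R] {p : MvPolynomial σ R}

theorem IsWeightedHomogeneous.eval_pow_weight_mul (hp : p.IsWeightedHomogeneous w m)
    (ε : R) (x : σ → R) : eval (fun i => ε ^ w i * x i) p = ε ^ m * eval x p := by
  rw [eval_eq, eval_eq, Finset.mul_sum]
  refine Finset.sum_congr rfl fun d hd => ?_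
  rw [← hp (mem_support_iff.mp hd), Finsupp.weight_apply, Finsupp.sum,
    ← Finset.prod_pow_eq_pow_sum]
  simp only [mul_pow, Finset.prod_mul_distrib, ← pow_mul, smul_eq_mul, mul_comm (w _)]
  ring

theorem IsWeightedHomogeneous.smul (hp : p.IsWeightedHomogeneous w m) (c : R) :
    (c • p).IsWeightedHomogeneous w m :=
  (weightedHomogeneousSubmodule R w m).smul_mem c hp

end CommSemiring

variable [CommRing R] [IsDomain R] [Infinite R] {p : MvPolynomial σ R}

theorem isWeightedHomogeneous_of_eval_pow_weight_mul
    (h : ∀ (ε : R) (x : σ → R), eval (fun i => ε ^ w i * x i) p = ε ^ m * eval x p) :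
    p.IsWeightedHomogeneous w m := by
  classical
  set S := p.support.image (Finsupp.weight w)
  have hsum : ∑ n ∈ S, weightedHomogeneousComponent w n p = p := by
    rw [← finsum_eq_sum_of_support_subset _ fun n hn => ?_, finsum_weightedHomogeneousComponent]
    by_contra hnS
    exact hn (weightedHomogeneousComponent_eq_zero_of_notMem w p n hnS)
  suffices hne : ∀ n ≠ m, weightedHomogeneousComponent w n p = 0 by
    intro d hd
    by_contra hdm
    simpa [coeff_weightedHomogeneousComponent, hd] using congr_arg (coeff d) (hne _ hdm)
  intro n hnm
  by_cases hnS : n ∉ S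
  · exact weightedHomogeneousComponent_eq_zero_of_notMem w p n hnS
  refine MvPolynomial.funext fun x => ?_
  -- As polynomials in `ε`: `∑ₙ εⁿ pₙ(x) = εᵐ p(x)`; compare the coefficients of `εⁿ`.
  have hpoly : ∑ n ∈ S, Polynomial.C (eval x (weightedHomogeneousComponent w n p)) *
      Polynomial.X ^ n = Polynomial.C (eval x p) * Polynomial.X ^ m := by
    refine Polynomial.funext fun ε => ?_
    simp only [Polynomial.eval_finsetSum, Polynomial.eval_mul, Polynomial.eval_C,
      Polynomial.eval_pow, Polynomial.eval_X]
    simp_rw [mul_comm _ (ε ^ _),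
      ← (weightedHomogeneousComponent_isWeightedHomogeneous _ _).eval_pow_weight_mul,
      ← map_sum, hsum, h]
  simpa [Polynomial.finsetSum_coeff, Polynomial.coeff_X_pow, hnm, not_not.mp hnS] using
    congr_arg (Polynomial.coeff · n) hpoly

theorem isWeightedHomogeneous_iff_eval_pow_weight_mul :
    p.IsWeightedHomogeneous w m ↔
      ∀ (ε : R) (x : σ → R), eval (fun i => ε ^ w i * x i) p = ε ^ m * eval x p :=
  ⟨IsWeightedHomogeneous.eval_pow_weight_mul, isWeightedHomogeneous_of_eval_pow_weight_mul⟩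

end MvPolynomial

theorem isQH_iff {t : Fin 2 → ℕ} {m : ℕ} {p : MvPolynomial (Fin 2) ℝ} :
    IsQH t m p ↔ p.IsWeightedHomogeneous t m :=
  isWeightedHomogeneous_iff_eval_pow_weight_mul.symm

section Wedge

variable {A : Type*} [CommRing A]

def wedge (U : Fin 2 → A) : (Fin 2 → A) →ₗ[A] A where
  toFun V := U 0 * V 1 - U 1 * V 0
  map_add' V W := by simp only [Pi.add_apply]; ring
  map_smul' a V := by simp only [Pi.smul_apply, smul_eq_mul, RingHom.id_apply]; ring

theorem wedge_apply (U V : Fin 2 → A) : wedge U V = U 0 * V 1 - U 1 * V 0 := rfl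

theorem wedge_self (U : Fin 2 → A) : wedge U U = 0 := by
  rw [wedge_apply, mul_comm, sub_self]

end Wedge

noncomputable def divergence (V : Fin 2 → MvPolynomial (Fin 2) ℝ) : MvPolynomial (Fin 2) ℝ :=
  pderiv 0 (V 0) + pderiv 1 (V 1)

variable {t : Fin 2 → ℕ} {k m : ℕ} {g : MvPolynomial (Fin 2) ℝ}
  {V : Fin 2 → MvPolynomial (Fin 2) ℝ}

theorem ham_zero : ham 0 = 0 := by
  ext1 j; fin_cases j <;> simp [ham]

theorem isWeightedHomogeneous_ham (hg : g.IsWeightedHomogeneous t (k + t 0 + t 1)) (j : Fin 2) :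
    (ham g j).IsWeightedHomogeneous t (k + t j) := by
  fin_cases j
  · exact (hg.pderiv rfl).neg
  · exact hg.pderiv (add_right_comm _ _ _)

theorem isWeightedHomogeneous_wedge_D0 (hV : ∀ j, (V j).IsWeightedHomogeneous t (k + t j)) :
    (wedge (D0 t) V).IsWeightedHomogeneous t (k + t 0 + t 1) := by
  have hX (i : Fin 2) : (D0 t i).IsWeightedHomogeneous t (t i) := by
    fin_cases i <;> exact (isWeightedHomogeneous_X ℝ t _).C_mul _
  have h01 : t 0 + (k + t 1) = k + t 0 + t 1 := by omega
  have h10 : t 1 + (k + t 0) = k + t 0 + t 1 := by omega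
  exact (h01 ▸ (hX 0).mul (hV 1)).sub (h10 ▸ (hX 1).mul (hV 0))

theorem isWeightedHomogeneous_divergence (hV : ∀ j, (V j).IsWeightedHomogeneous t (k + t j)) :
    (divergence V).IsWeightedHomogeneous t k :=
  ((hV 0).pderiv rfl).add ((hV 1).pderiv rfl)

theorem wedge_D0_ham (hg : g.IsWeightedHomogeneous t m) :
    wedge (D0 t) (ham g) = (m : ℝ) • g := by
  have euler := hg.sum_weight_X_mul_pderiv
  simp only [Fin.sum_univ_two, ← Nat.cast_smul_eq_nsmul ℝ, smul_eq_C_mul] at euler ⊢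
  simp only [wedge_apply, D0, ham, Matrix.cons_val_zero, Matrix.cons_val_one]
  linear_combination euler

theorem natCast_smul_eq_ham_wedge_D0_add_divergence_smul_D0
    (hV : ∀ j, (V j).IsWeightedHomogeneous t (k + t j)) :
    ((k + t 0 + t 1 : ℕ) : ℝ) • V = ham (wedge (D0 t) V) + divergence V • D0 t := by
  have euler (j : Fin 2) := (hV j).sum_weight_X_mul_pderiv
  simp only [Fin.sum_univ_two, ← Nat.cast_smul_eq_nsmul ℝ, smul_eq_C_mul] at euler
  push_cast [map_add] at euler
  ext1 j
  fin_cases j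
  all_goals
    simp only [Pi.add_apply, Pi.smul_apply, smul_eq_C_mul, smul_eq_mul, wedge_apply, D0, ham,
      divergence, Matrix.cons_val_zero, Matrix.cons_val_one, map_sub, Derivation.leibniz, pderiv_C,
      pderiv_X_self, pderiv_X_of_ne zero_ne_one, pderiv_X_of_ne zero_ne_one.symm]
    push_cast [map_add]
  · linear_combination -euler 0
  · linear_combination -euler 1

theorem exists_eq_smul_D0_of_wedge_D0_eq_zero (hk : k + t 0 + t 1 ≠ 0)
    (hV : ∀ j, (V j).IsWeightedHomogeneous t (k + t j)) (h : wedge (D0 t) V = 0) :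
    ∃ μ : MvPolynomial (Fin 2) ℝ, μ.IsWeightedHomogeneous t k ∧ V = μ • D0 t := by
  have hk' : ((k + t 0 + t 1 : ℕ) : ℝ) ≠ 0 := Nat.cast_ne_zero.mpr hk
  refine ⟨((k + t 0 + t 1 : ℕ) : ℝ)⁻¹ • divergence V, ?_, ?_⟩
  · exact (isWeightedHomogeneous_divergence hV).smul _
  · rw [smul_assoc, ← zero_add (divergence V • D0 t), ← ham_zero, ← h,
      ← natCast_smul_eq_ham_wedge_D0_add_divergence_smul_D0 hV, inv_smul_smul₀ hk']

theorem smul_D0_injective (ht : t 0 ≠ 0) :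
    Function.Injective fun μ : MvPolynomial (Fin 2) ℝ => μ • D0 t := by
  intro μ μ' h
  have h0 := congr_fun h 0
  simp only [D0, Pi.smul_apply, Matrix.cons_val_zero, smul_eq_mul] at h0
  refine mul_right_cancel₀ (mul_ne_zero ?_ (X_ne_zero 0)) h0
  simpa using ht

theorem exists_eq_ham_add_smul_D0_add_smul_ham_iff {r : ℕ} {𝔥 lam : MvPolynomial (Fin 2) ℝ}
    {P : Fin 2 → MvPolynomial (Fin 2) ℝ} (hrk : r ≤ k) (hk : k + t 0 + t 1 ≠ 0)
    (h𝔥 : 𝔥.IsWeightedHomogeneous t (r + t 0 + t 1))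
    (hg : g.IsWeightedHomogeneous t (k + t 0 + t 1)) (hlam : lam.IsWeightedHomogeneous t (k - r))
    (hP : ∀ j, (P j).IsWeightedHomogeneous t (k + t j)) :
    (∃ μ : MvPolynomial (Fin 2) ℝ, μ.IsWeightedHomogeneous t k ∧
        P = ham g + μ • D0 t + lam • ham 𝔥) ↔
      wedge (D0 t) P = ((k + t 0 + t 1 : ℕ) : ℝ) • g + (((r + t 0 + t 1 : ℕ) : ℝ) • lam) * 𝔥 := by
  have hwedge (Q : Fin 2 → MvPolynomial (Fin 2) ℝ) : wedge (D0 t) (Q - ham g - lam • ham 𝔥) =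
      wedge (D0 t) Q - (((k + t 0 + t 1 : ℕ) : ℝ) • g + (((r + t 0 + t 1 : ℕ) : ℝ) • lam) * 𝔥) := by
    rw [map_sub, map_sub, map_smul, wedge_D0_ham hg, wedge_D0_ham h𝔥, smul_eq_mul, smul_mul_assoc,
      mul_smul_comm, sub_sub]
  constructor
  · rintro ⟨μ, -, rfl⟩
    have hμ : ham g + μ • D0 t + lam • ham 𝔥 - ham g - lam • ham 𝔥 = μ • D0 t := by abel
    rw [← sub_eq_zero, ← hwedge, hμ, map_smul, wedge_self, smul_zero]
  · intro h
    have hQ (j : Fin 2) : ((P - ham g - lam • ham 𝔥) j).IsWeightedHomogeneous t (k + t j) := by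
      have hlam𝔥 := hlam.mul (isWeightedHomogeneous_ham h𝔥 j)
      rw [show k - r + (r + t j) = k + t j by omega] at hlam𝔥
      exact ((hP j).sub (isWeightedHomogeneous_ham hg j)).sub hlam𝔥
    obtain ⟨μ, hμ, hμQ⟩ := exists_eq_smul_D0_of_wedge_D0_eq_zero hk hQ (by rw [hwedge, h, sub_self])
    exact ⟨μ, hμ, by rw [← hμQ]; abel⟩

theorem planar_splitting_general (t : Fin 2 → ℕ) (ht : ∀ i, 0 < t i) (r k : ℕ) (hrk : r ≤ k)
    (𝔥 : MvPolynomial (Fin 2) ℝ) (h𝔥 : IsQH t (r + t 0 + t 1) 𝔥)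
    (Δ : Submodule ℝ (MvPolynomial (Fin 2) ℝ))
    (hΔQH : ∀ g ∈ Δ, IsQH t (k + t 0 + t 1) g)
    (hΔcompl : ∀ p : MvPolynomial (Fin 2) ℝ, IsQH t (k + t 0 + t 1) p →
      ∃! gl : MvPolynomial (Fin 2) ℝ × MvPolynomial (Fin 2) ℝ,
        gl.1 ∈ Δ ∧ IsQH t (k - r) gl.2 ∧ p = gl.1 + gl.2 * 𝔥)
    (P : Fin 2 → MvPolynomial (Fin 2) ℝ) (hP : IsQHVF t k P) :
    ∃! c : MvPolynomial (Fin 2) ℝ × MvPolynomial (Fin 2) ℝ × MvPolynomial (Fin 2) ℝ,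
      c.1 ∈ Δ ∧ IsQH t k c.2.1 ∧ IsQH t (k - r) c.2.2 ∧
        ∀ j, P j = ham c.1 j + c.2.1 * D0 t j + c.2.2 * ham 𝔥 j := by
  simp only [IsQHVF, isQH_iff] at h𝔥 hΔQH hΔcompl hP ⊢
  have ht0 := ht 0
  have hk : k + t 0 + t 1 ≠ 0 := by omega
  have ha : ((k + t 0 + t 1 : ℕ) : ℝ) ≠ 0 := Nat.cast_ne_zero.mpr hk
  have hb : ((r + t 0 + t 1 : ℕ) : ℝ) ≠ 0 := Nat.cast_ne_zero.mpr (by omega)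
  have hsplit {g lam : MvPolynomial (Fin 2) ℝ} (hg : g ∈ Δ)
      (hlam : lam.IsWeightedHomogeneous t (k - r)) :=
    exists_eq_ham_add_smul_D0_add_smul_ham_iff hrk hk h𝔥 (hΔQH g hg) hlam hP
  obtain ⟨⟨g₀, l⟩, ⟨hg₀, hl, hdecomp⟩, huniq⟩ := hΔcompl _ (isWeightedHomogeneous_wedge_D0 hP)
  dsimp only at hg₀ hl hdecomp
  have hgΔ := Δ.smul_mem ((k + t 0 + t 1 : ℕ) : ℝ)⁻¹ hg₀
  have hlam := hl.smul ((r + t 0 + t 1 : ℕ) : ℝ)⁻¹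
  obtain ⟨μ, hμ, hPμ⟩ := (hsplit hgΔ hlam).2 (by rwa [smul_inv_smul₀ ha, smul_inv_smul₀ hb])
  refine ⟨(_, μ, _), ⟨hgΔ, hμ, hlam, fun j => congr_fun hPμ j⟩, ?_⟩
  rintro ⟨g, μ', lam⟩ ⟨hg, hμ', hlam', hP'⟩
  have hPμ' : P = ham g + μ' • D0 t + lam • ham 𝔥 := funext hP'
  obtain ⟨rfl, rfl⟩ := Prod.mk.inj <| huniq (_, _)
    ⟨Δ.smul_mem _ hg, hlam'.smul _, (hsplit hg hlam').1 ⟨μ', hμ', hPμ'⟩⟩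
  rw [inv_smul_smul₀ ha, inv_smul_smul₀ hb] at hPμ ⊢
  rw [smul_D0_injective ht0.ne' (add_left_cancel (add_right_cancel (hPμ'.symm.trans hPμ)))]

/-- The planar splitting `𝒬^{t̂}_k = Ĉ_k ⊕ D̂_k ⊕ F̂_k`: every planar
quasi-homogeneous vector field `P` of degree `k` decomposes uniquely as
`P = X_g + μ·D₀ + λ·X_𝔥` with `g ∈ Δ̂`, `μ ∈ 𝒫^{t̂}_k`, `λ ∈ 𝒫^{t̂}_{k−r}`. -/
theorem planar_splitting (t : Fin 2 → ℕ) (ht : ∀ i, 0 < t i) (r k : ℕ) (hrk : r ≤ k)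
    (𝔥 : MvPolynomial (Fin 2) ℝ) (h𝔥 : IsQH t (r + t 0 + t 1) 𝔥) (h𝔥0 : 𝔥 ≠ 0)
    (Δ : Submodule ℝ (MvPolynomial (Fin 2) ℝ))
    (hΔQH : ∀ g ∈ Δ, IsQH t (k + t 0 + t 1) g)
    (hΔcompl : ∀ p : MvPolynomial (Fin 2) ℝ, IsQH t (k + t 0 + t 1) p →
      ∃! gl : MvPolynomial (Fin 2) ℝ × MvPolynomial (Fin 2) ℝ,
        gl.1 ∈ Δ ∧ IsQH t (k - r) gl.2 ∧ p = gl.1 + gl.2 * 𝔥)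
    (P : Fin 2 → MvPolynomial (Fin 2) ℝ) (hP : IsQHVF t k P) :
    ∃! c : MvPolynomial (Fin 2) ℝ × MvPolynomial (Fin 2) ℝ × MvPolynomial (Fin 2) ℝ,
      c.1 ∈ Δ ∧ IsQH t k c.2.1 ∧ IsQH t (k - r) c.2.2 ∧
        ∀ j, P j = ham c.1 j + c.2.1 * D0 t j + c.2.2 * ham 𝔥 j :=
  planar_splitting_general t ht r k hrk 𝔥 h𝔥 Δ hΔQH hΔcompl P hP
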